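/- arXiv:1602.02607 — 4 statements merged into one kernel-verified Lean document; each statement's English description precedes it below -/
import Mathlib

section
/- Let φ_i, φ_j: [a, a+δ] → ℝ be absolutely continuous with φ_i(a) = φ_j(a) = 0, and suppose ∫_a^{a+r} |φ_k'(s) − φ_k'(a)| ds ≤ ηr for k ∈ {i,j} and all 0 < r < δ. Then for all a < t < a+δ, |∫_a^t (φ_i φ_j' − φ_j φ_i')| ≤ 2η(|φ_i'(a)| + |φ_j'(a)| + η)(t−a)². -/
/-!
Write `φ_k(s) = A_k (s - a) + r_k(s)` with `A_k = φ_k'(a)`. The Lebesgue point condition gives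
`|r_k| ≤ η (t - a)` on `[a, t]`, hence `|φ_k| ≤ (|A_k| + η) (t - a)`. Since the terms
`A_i A_j (s - a)` cancel,
`φ_i φ_j' - φ_j φ_i' = φ_i (φ_j' - A_j) - φ_j (φ_i' - A_i) + A_j r_i - A_i r_j`;
the first two terms integrate to at most `(|A_k| + η) (t - a) · η (t - a)`, the last two to at
most `|A_k| η (t - a)²`.
-/

open MeasureTheory Set

theorem abs_mul_sub_mul_le (x y x' y' A B r : ℝ) :
    |x * y' - y * x'| ≤
      |x| * |y' - B| + |y| * |x' - A| + |B| * |x - A * r| + |A| * |y - B * r| := by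
  have hsplit : x * y' - y * x' =
      x * (y' - B) - y * (x' - A) + B * (x - A * r) - A * (y - B * r) := by ring
  rw [hsplit, ← abs_mul, ← abs_mul, ← abs_mul, ← abs_mul]
  exact (abs_sub _ _).trans
    (add_le_add ((abs_add_le _ _).trans (add_le_add (abs_sub _ _) le_rfl)) le_rfl)

theorem abs_le_of_abs_sub_mul_sub_le {x A a s t E : ℝ} (hs : s ∈ Icc a t)
    (h : |x - A * (s - a)| ≤ E) : |x| ≤ |A| * (t - a) + E := by
  have hlinear : |A * (s - a)| ≤ |A| * (t - a) := by
    rw [abs_mul, abs_of_nonneg (sub_nonneg.mpr hs.1)]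
    exact mul_le_mul_of_nonneg_left (by linarith [hs.2]) (abs_nonneg A)
  linarith [abs_sub_abs_le_abs_sub x (A * (s - a))]

theorem abs_mul_sub_mul_le_of_abs_sub_mul_sub_le {x y x' y' A B a s t E : ℝ}
    (hs : s ∈ Icc a t) (hx : |x - A * (s - a)| ≤ E) (hy : |y - B * (s - a)| ≤ E) :
    |x * y' - y * x'| ≤
      (|A| * (t - a) + E) * |y' - B| + (|B| * (t - a) + E) * |x' - A| + (|A| + |B|) * E := by
  refine (abs_mul_sub_mul_le x y x' y' A B (s - a)).trans ?_
  have := mul_le_mul_of_nonneg_right (abs_le_of_abs_sub_mul_sub_le hs hx) (abs_nonneg (y' - B))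
  have := mul_le_mul_of_nonneg_right (abs_le_of_abs_sub_mul_sub_le hs hy) (abs_nonneg (x' - A))
  have := mul_le_mul_of_nonneg_left hx (abs_nonneg B)
  have := mul_le_mul_of_nonneg_left hy (abs_nonneg A)
  linarith

section Primitive

variable {f g : ℝ → ℝ} {a t : ℝ}

theorem continuousOn_of_eq_primitive (hg : IntegrableOn g (Icc a t))
    (hf : ∀ s ∈ Icc a t, f s = ∫ u in a..s, g u) : ContinuousOn f (Icc a t) :=
  (intervalIntegral.continuousOn_primitive hg).congr fun s hs =>
    (hf s hs).trans (intervalIntegral.integral_of_le hs.1)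

theorem abs_sub_mul_sub_le_integral_of_eq_primitive (hg : IntegrableOn g (Icc a t))
    (hf : ∀ s ∈ Icc a t, f s = ∫ u in a..s, g u) (A : ℝ) {s : ℝ} (hs : s ∈ Icc a t) :
    |f s - A * (s - a)| ≤ ∫ u in a..t, |g u - A| := by
  have hgA : IntegrableOn (fun u => g u - A) (Icc a t) := hg.sub (integrableOn_const (by simp))
  have hlinear : f s - A * (s - a) = ∫ u in a..s, (g u - A) := by
    rw [hf s hs, intervalIntegral.integral_sub _ intervalIntegrable_const,
      intervalIntegral.integral_const, smul_eq_mul, mul_comm]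
    exact (intervalIntegrable_iff_integrableOn_Icc_of_le hs.1).mpr
      (hg.mono_set (Icc_subset_Icc le_rfl hs.2))
  rw [hlinear]
  calc |∫ u in a..s, (g u - A)| ≤ ∫ u in a..s, |g u - A| :=
        intervalIntegral.abs_integral_le_integral_abs hs.1
    _ ≤ ∫ u in a..t, |g u - A| :=
        intervalIntegral.integral_mono_interval le_rfl hs.1 hs.2
          (Filter.Eventually.of_forall fun u => abs_nonneg _)
          ((intervalIntegrable_iff_integrableOn_Icc_of_le (hs.1.trans hs.2)).mpr hgA.abs)

end Primitive

theorem abs_integral_mul_sub_mul_le_of_eq_primitive {f₁ f₂ g₁ g₂ : ℝ → ℝ} {a t A₁ A₂ E : ℝ}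
    (hat : a ≤ t) (hg₁ : IntegrableOn g₁ (Icc a t)) (hg₂ : IntegrableOn g₂ (Icc a t))
    (hf₁ : ∀ s ∈ Icc a t, f₁ s = ∫ u in a..s, g₁ u)
    (hf₂ : ∀ s ∈ Icc a t, f₂ s = ∫ u in a..s, g₂ u)
    (hE₁ : ∫ u in a..t, |g₁ u - A₁| ≤ E) (hE₂ : ∫ u in a..t, |g₂ u - A₂| ≤ E) :
    |∫ s in a..t, (f₁ s * g₂ s - f₂ s * g₁ s)| ≤ 2 * E * ((|A₁| + |A₂|) * (t - a) + E) := by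
  have intervalIntegrable_of : ∀ {h : ℝ → ℝ}, IntegrableOn h (Icc a t) → IntervalIntegrable h volume a t :=
    fun h => (intervalIntegrable_iff_integrableOn_Icc_of_le hat).mpr h
  have hE : 0 ≤ E :=
    (intervalIntegral.integral_nonneg hat fun _ _ => abs_nonneg _).trans hE₁
  have hdev₁ : ∀ s ∈ Icc a t, |f₁ s - A₁ * (s - a)| ≤ E := fun s hs =>
    (abs_sub_mul_sub_le_integral_of_eq_primitive hg₁ hf₁ A₁ hs).trans hE₁
  have hdev₂ : ∀ s ∈ Icc a t, |f₂ s - A₂ * (s - a)| ≤ E := fun s hs =>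
    (abs_sub_mul_sub_le_integral_of_eq_primitive hg₂ hf₂ A₂ hs).trans hE₂
  set C₁ := |A₁| * (t - a) + E
  set C₂ := |A₂| * (t - a) + E
  have hC₁ : 0 ≤ C₁ := by have := sub_nonneg.mpr hat; positivity
  have hC₂ : 0 ≤ C₂ := by have := sub_nonneg.mpr hat; positivity
  have hpointwise : ∀ s ∈ Icc a t, |f₁ s * g₂ s - f₂ s * g₁ s| ≤
      C₁ * |g₂ s - A₂| + C₂ * |g₁ s - A₁| + (|A₁| + |A₂|) * E := fun s hs =>
    abs_mul_sub_mul_le_of_abs_sub_mul_sub_le hs (hdev₁ s hs) (hdev₂ s hs)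
  have hdevInt₁ : IntervalIntegrable (fun s => |g₁ s - A₁|) volume a t :=
    intervalIntegrable_of (hg₁.sub (integrableOn_const (by simp))).abs
  have hdevInt₂ : IntervalIntegrable (fun s => |g₂ s - A₂|) volume a t :=
    intervalIntegrable_of (hg₂.sub (integrableOn_const (by simp))).abs
  have harea : IntervalIntegrable (fun s => f₁ s * g₂ s - f₂ s * g₁ s) volume a t :=
    intervalIntegrable_of ((IntegrableOn.continuousOn_mul (continuousOn_of_eq_primitive hg₁ hf₁) hg₂
      isCompact_Icc).sub
      (IntegrableOn.continuousOn_mul (continuousOn_of_eq_primitive hg₂ hf₂) hg₁ isCompact_Icc))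
  calc |∫ s in a..t, (f₁ s * g₂ s - f₂ s * g₁ s)|
      ≤ ∫ s in a..t, |f₁ s * g₂ s - f₂ s * g₁ s| :=
        intervalIntegral.abs_integral_le_integral_abs hat
    _ ≤ ∫ s in a..t, (C₁ * |g₂ s - A₂| + C₂ * |g₁ s - A₁| + (|A₁| + |A₂|) * E) :=
        intervalIntegral.integral_mono_on hat harea.abs
          (((hdevInt₂.const_mul C₁).add (hdevInt₁.const_mul C₂)).add intervalIntegrable_const)
          hpointwise
    _ = C₁ * (∫ s in a..t, |g₂ s - A₂|) + C₂ * (∫ s in a..t, |g₁ s - A₁|) +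
          (t - a) * ((|A₁| + |A₂|) * E) := by
        rw [intervalIntegral.integral_add ((hdevInt₂.const_mul C₁).add (hdevInt₁.const_mul C₂))
            intervalIntegrable_const, intervalIntegral.integral_add (hdevInt₂.const_mul C₁)
            (hdevInt₁.const_mul C₂), intervalIntegral.integral_const_mul,
          intervalIntegral.integral_const_mul, intervalIntegral.integral_const, smul_eq_mul]
    _ ≤ C₁ * E + C₂ * E + (t - a) * ((|A₁| + |A₂|) * E) :=
        add_le_add (add_le_add (mul_le_mul_of_nonneg_left hE₂ hC₁)
          (mul_le_mul_of_nonneg_left hE₁ hC₂)) le_rfl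
    _ = 2 * E * ((|A₁| + |A₂|) * (t - a) + E) := by ring

theorem signed_area_estimate_general (φi φj : ℝ → ℝ) (a δ η : ℝ)
    (hinti : IntegrableOn (deriv φi) (Icc a (a + δ)))
    (hintj : IntegrableOn (deriv φj) (Icc a (a + δ)))
    (hftci : ∀ t ∈ Icc a (a + δ), φi t = ∫ s in a..t, deriv φi s)
    (hftcj : ∀ t ∈ Icc a (a + δ), φj t = ∫ s in a..t, deriv φj s)
    (hlebi : ∀ r : ℝ, 0 < r → r < δ →
      ∫ s in a..a + r, |deriv φi s - deriv φi a| ≤ η * r)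
    (hlebj : ∀ r : ℝ, 0 < r → r < δ →
      ∫ s in a..a + r, |deriv φj s - deriv φj a| ≤ η * r) :
    ∀ t, a < t → t < a + δ →
      |∫ s in a..t, (φi s * deriv φj s - φj s * deriv φi s)| ≤
        2 * η * (|deriv φi a| + |deriv φj a| + η) * (t - a) ^ 2 := by
  intro t hat htδ
  have hsub : Icc a t ⊆ Icc a (a + δ) := Icc_subset_Icc le_rfl htδ.le
  have hlebi' := hlebi (t - a) (sub_pos.mpr hat) (by linarith)
  have hlebj' := hlebj (t - a) (sub_pos.mpr hat) (by linarith)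
  rw [add_sub_cancel] at hlebi' hlebj'
  refine (abs_integral_mul_sub_mul_le_of_eq_primitive hat.le (hinti.mono_set hsub)
    (hintj.mono_set hsub) (fun s hs => hftci s (hsub hs)) (fun s hs => hftcj s (hsub hs))
    hlebi' hlebj').trans_eq ?_
  ring

/-- Lemma 3.2(2): estimate on the signed area swept out by a planar absolutely continuous
curve near a quantitative Lebesgue point of its derivative. -/
theorem signed_area_estimate (φi φj : ℝ → ℝ) (a δ η : ℝ) (hδ : 0 < δ) (hη : 0 < η)
    (hφia : φi a = 0) (hφja : φj a = 0)
    (hinti : IntegrableOn (deriv φi) (Icc a (a + δ)))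
    (hintj : IntegrableOn (deriv φj) (Icc a (a + δ)))
    (hftci : ∀ t ∈ Icc a (a + δ), φi t = ∫ s in a..t, deriv φi s)
    (hftcj : ∀ t ∈ Icc a (a + δ), φj t = ∫ s in a..t, deriv φj s)
    (hlebi : ∀ r : ℝ, 0 < r → r < δ →
      ∫ s in a..a + r, |deriv φi s - deriv φi a| ≤ η * r)
    (hlebj : ∀ r : ℝ, 0 < r → r < δ →
      ∫ s in a..a + r, |deriv φj s - deriv φj a| ≤ η * r) :
    ∀ t, a < t → t < a + δ →
      |∫ s in a..t, (φi s * deriv φj s - φj s * deriv φi s)| ≤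
        2 * η * (|deriv φi a| + |deriv φj a| + η) * (t - a) ^ 2 :=
  signed_area_estimate_general φi φj a δ η hinti hintj hftci hftcj hlebi hlebj
end

section
/- Let φ: [a,b] → ℝʳ be absolutely continuous, p ∈ ℝⁿ (n = r + r(r−1)/2) with (p_1,...,p_r) = φ(a). Define γ: [a,b] → ℝⁿ by γ_i = φ_i for 1 ≤ i ≤ r and γ_{ij}(t) = p_{ij} + (1/2)∫_a^t (φ_i φ_j' − φ_j φ_i') for 1 ≤ j < i ≤ r. Then γ is an absolutely continuous horizontal curve in the free step-2 Carnot group G_r with γ(a) = p. Moreover if φ is C¹ then γ is C¹. -/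
/-!
Componentwise, `γ = (φ, p.2 + ∫ₐᵗ v)` where `v_{ij} = (φ_i φ_j' − φ_j φ_i')/2` is integrable on
`[a,b]`, because `φ` is a primitive of an integrable function, hence continuous and bounded there.
So `γ` is itself the primitive of the integrable `G = (φ', v)`, and Lebesgue's differentiation
theorem gives `γ' = G` a.e. Horizontality is the pointwise identity `G(t) = Σ_k φ_k'(t) X_k(γ(t))`.
If `φ` is `C¹`, then `G` is continuous and the fundamental theorem of calculus gives `γ' = G`
everywhere.
-/

open MeasureTheory Set

/-- The underlying space of the free step-2 Carnot group `G_r`. -/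
abbrev CarnotPt (r : ℕ) := (Fin r → ℝ) × ({p : Fin r × Fin r // p.2 < p.1} → ℝ)

/-- The horizontal vector fields
`X_k = ∂_k + Σ_{j>k} (x_j/2) ∂_{jk} − Σ_{j<k} (x_j/2) ∂_{kj}`. -/
noncomputable def Xh {r : ℕ} (k : Fin r) (x : CarnotPt r) : CarnotPt r :=
  (Pi.single k 1,
   fun p => if p.1.2 = k then x.1 p.1.1 / 2
            else if p.1.1 = k then -(x.1 p.1.2) / 2 else 0)

section AbsolutelyContinuous

variable {E : Type*} [NormedAddCommGroup E] [NormedSpace ℝ E]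

theorem continuousOn_Icc_of_eq_add_integral {c G : ℝ → E} {a b : ℝ}
    (hG : IntegrableOn G (Icc a b))
    (hc : ∀ t₁ ∈ Icc a b, ∀ t₂ ∈ Icc a b, c t₂ = c t₁ + ∫ t in t₁..t₂, G t) :
    ContinuousOn c (Icc a b) := by
  rcases lt_or_ge b a with hba | hab
  · simp [Icc_eq_empty_of_lt hba]
  have hprim := intervalIntegral.continuousOn_primitive_interval (μ := volume)
    (uIcc_of_le hab ▸ hG)
  rw [uIcc_of_le hab] at hprim
  exact (continuousOn_const.add hprim).congr fun t ht => hc a ⟨le_rfl, hab⟩ t ht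

theorem ae_hasDerivAt_of_eq_add_integral [CompleteSpace E] {c G : ℝ → E} {a b : ℝ}
    (hG : IntegrableOn G (Icc a b))
    (hc : ∀ t₁ ∈ Icc a b, ∀ t₂ ∈ Icc a b, c t₂ = c t₁ + ∫ t in t₁..t₂, G t) :
    ∀ᵐ t ∂(volume.restrict (Icc a b)), HasDerivAt c (G t) t := by
  rcases lt_or_ge b a with hba | hab
  · simp [Icc_eq_empty_of_lt hba]
  have hGi : IntervalIntegrable G volume a b :=
    (intervalIntegrable_iff_integrableOn_Icc_of_le hab).2 hG
  rw [← Measure.restrict_congr_set Ioo_ae_eq_Icc]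
  filter_upwards [ae_restrict_mem measurableSet_Ioo,
    ae_restrict_of_ae hGi.ae_hasDerivAt_integral] with t ht hderiv
  have hprim := hderiv (by rw [uIcc_of_le hab]; exact Ioo_subset_Icc_self ht) a left_mem_uIcc
  refine (hprim.const_add (c a)).congr_of_eventuallyEq ?_
  filter_upwards [Ioo_mem_nhds ht.1 ht.2] with s hs
  exact hc a ⟨le_rfl, hab⟩ s (Ioo_subset_Icc_self hs)

theorem contDiff_one_of_hasDerivAt {c c' : ℝ → E} (hc : ∀ t, HasDerivAt c (c' t) t)
    (hc' : Continuous c') : ContDiff ℝ 1 c := by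
  rw [contDiff_one_iff_deriv, show deriv c = c' from funext fun t => (hc t).deriv]
  exact ⟨fun t => (hc t).differentiableAt, hc'⟩

end AbsolutelyContinuous

section ProdPrimitive

variable {F ι : Type*} [NormedAddCommGroup F] [NormedSpace ℝ F] [Fintype ι]

theorem eq_add_intervalIntegral_prod_primitive [CompleteSpace F] {φ : ℝ → F}
    {G : ℝ → F × (ι → ℝ)} {a b : ℝ} (z : ι → ℝ) (hG : IntegrableOn G (Icc a b))
    (hφ : ∀ t₁ ∈ Icc a b, ∀ t₂ ∈ Icc a b, φ t₂ = φ t₁ + ∫ t in t₁..t₂, (G t).1)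
    {t₁ t₂ : ℝ} (h₁ : t₁ ∈ Icc a b) (h₂ : t₂ ∈ Icc a b) :
    (φ t₂, fun i => z i + ∫ s in a..t₂, (G s).2 i) =
      (φ t₁, fun i => z i + ∫ s in a..t₁, (G s).2 i) + ∫ t in t₁..t₂, G t := by
  have hGi {u₁ u₂ : ℝ} (hu₁ : u₁ ∈ Icc a b) (hu₂ : u₂ ∈ Icc a b) :
      IntervalIntegrable G volume u₁ u₂ :=
    (hG.mono_set (uIcc_subset_Icc hu₁ hu₂)).intervalIntegrable
  ext i
  · have hfst : (∫ t in t₁..t₂, G t).1 = ∫ t in t₁..t₂, (G t).1 :=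
      ((ContinuousLinearMap.fst ℝ F (ι → ℝ)).intervalIntegral_comp_comm (hGi h₁ h₂)).symm
    rw [Prod.fst_add, hfst]
    exact hφ t₁ h₁ t₂ h₂
  · have hsnd : (∫ t in t₁..t₂, G t).2 i = ∫ t in t₁..t₂, (G t).2 i :=
      (((ContinuousLinearMap.proj i).comp
        (ContinuousLinearMap.snd ℝ F (ι → ℝ))).intervalIntegral_comp_comm (hGi h₁ h₂)).symm
    have hGqi {u₁ u₂ : ℝ} (hu₁ : u₁ ∈ Icc a b) (hu₂ : u₂ ∈ Icc a b) :
        IntervalIntegrable (fun t => (G t).2 i) volume u₁ u₂ :=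
      (IntegrableOn.mono_set (hG.snd.eval i) (uIcc_subset_Icc hu₁ hu₂)).intervalIntegrable
    have ha : a ∈ Icc a b := ⟨le_rfl, h₁.1.trans h₁.2⟩
    rw [Prod.snd_add, Pi.add_apply, hsnd, add_assoc,
      intervalIntegral.integral_add_adjacent_intervals (hGqi ha h₁) (hGqi h₁ h₂)]

theorem hasDerivAt_prod_primitive {φ : ℝ → F} {G : ℝ → F × (ι → ℝ)} (a : ℝ) (z : ι → ℝ)
    (hφ : ∀ t, HasDerivAt φ (G t).1 t) (hG : Continuous G) (t : ℝ) :
    HasDerivAt (fun t => (φ t, fun i => z i + ∫ s in a..t, (G s).2 i)) (G t) t := by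
  refine (hφ t).prodMk (hasDerivAt_pi.2 fun i => ?_)
  have hGi : Continuous fun s => (G s).2 i := (continuous_apply i).comp (continuous_snd.comp hG)
  exact (hGi.integral_hasStrictDerivAt a t).hasDerivAt.const_add (z i)

end ProdPrimitive

section Carnot

variable {r : ℕ}

noncomputable def horizontalVector (x v : Fin r → ℝ) : CarnotPt r :=
  (v, fun q => 1 / 2 * (x q.1.1 * v q.1.2 - x q.1.2 * v q.1.1))

theorem sum_smul_Xh (v : Fin r → ℝ) (x : CarnotPt r) :
    ∑ k, v k • Xh k x = horizontalVector x.1 v := by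
  ext i
  · simp [Xh, horizontalVector, Prod.fst_sum, Finset.sum_apply, Pi.single_apply]
  · have hne : i.1.2 ≠ i.1.1 := i.2.ne
    rw [Prod.snd_sum, Finset.sum_apply, Fintype.sum_eq_add i.1.2 i.1.1 hne]
    · simp [Xh, horizontalVector, hne]
      ring
    · intro k hk
      simp [Xh, Ne.symm hk.1, Ne.symm hk.2]

theorem MeasureTheory.IntegrableOn.horizontalVector {φ f : ℝ → Fin r → ℝ} {s : Set ℝ}
    (hf : IntegrableOn f s) (hφ : ContinuousOn φ s) (hs : IsCompact s) :
    IntegrableOn (fun t => horizontalVector (φ t) (f t)) s := by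
  have hcoord (i j : Fin r) : IntegrableOn (fun t => φ t i * f t j) s :=
    IntegrableOn.continuousOn_mul ((continuous_apply i).comp_continuousOn hφ) (hf.eval j) hs
  exact hf.prodMk <| Integrable.of_eval fun q =>
    ((hcoord q.1.1 q.1.2).sub (hcoord q.1.2 q.1.1)).const_mul _

theorem Continuous.horizontalVector {φ f : ℝ → Fin r → ℝ} (hφ : Continuous φ)
    (hf : Continuous f) : Continuous fun t => horizontalVector (φ t) (f t) := by
  unfold _root_.horizontalVector
  fun_prop

end Carnot

theorem horizontal_lift_general (r : ℕ) (a b : ℝ)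
    (φ f : ℝ → Fin r → ℝ) (p : CarnotPt r) (hpa : p.1 = φ a)
    (hint : IntegrableOn f (Icc a b))
    (hftc : ∀ t₁ ∈ Icc a b, ∀ t₂ ∈ Icc a b, φ t₂ = φ t₁ + ∫ t in t₁..t₂, f t)
    (γ : ℝ → CarnotPt r)
    (hγ : ∀ t, γ t = (φ t,
      fun q => p.2 q + (1 / 2) * ∫ s in a..t,
        (φ s q.1.1 * f s q.1.2 - φ s q.1.2 * f s q.1.1))) :
    γ a = p ∧
    (∃ G : ℝ → CarnotPt r, IntegrableOn G (Icc a b) ∧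
      (∀ᵐ t ∂(volume.restrict (Icc a b)), HasDerivAt γ (G t) t) ∧
      (∀ t₁ ∈ Icc a b, ∀ t₂ ∈ Icc a b, γ t₂ = γ t₁ + ∫ t in t₁..t₂, G t) ∧
      (∀ᵐ t ∂(volume.restrict (Icc a b)), ∃ c : Fin r → ℝ,
        G t = ∑ k, c k • Xh k (γ t))) ∧
    ((∀ t, HasDerivAt φ (f t) t) → Continuous f → ContDiff ℝ 1 γ) := by
  set G : ℝ → CarnotPt r := fun t => horizontalVector (φ t) (f t)
  have hγG : γ = fun t => (φ t, fun q => p.2 q + ∫ s in a..t, (G s).2 q) := by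
    funext t
    simp only [hγ, G, horizontalVector, intervalIntegral.integral_const_mul]
  have hGi : IntegrableOn G (Icc a b) :=
    hint.horizontalVector (continuousOn_Icc_of_eq_add_integral hint hftc) isCompact_Icc
  have hγftc : ∀ t₁ ∈ Icc a b, ∀ t₂ ∈ Icc a b, γ t₂ = γ t₁ + ∫ t in t₁..t₂, G t := by
    rw [hγG]
    exact fun t₁ h₁ t₂ h₂ => eq_add_intervalIntegral_prod_primitive p.2 hGi hftc h₁ h₂
  refine ⟨by simp [hγG, ← hpa], ⟨G, hGi, ae_hasDerivAt_of_eq_add_integral hGi hγftc, hγftc,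
    ae_of_all _ fun t => ⟨f t, by rw [sum_smul_Xh, hγG]⟩⟩, fun hφ' hf => ?_⟩
  have hGc : Continuous G :=
    (continuous_iff_continuousAt.2 fun t => (hφ' t).continuousAt).horizontalVector hf
  rw [hγG]
  exact contDiff_one_of_hasDerivAt (hasDerivAt_prod_primitive a p.2 hφ' hGc) hGc

/-- The horizontal lift of an absolutely continuous curve `φ : [a,b] → ℝʳ` starting at a
point `p` with `(p_1,…,p_r) = φ(a)` is an absolutely continuous horizontal curve in `G_r`
starting at `p`; it is `C¹` whenever `φ` is `C¹`. -/
theorem horizontal_lift (r : ℕ) (hr : 2 ≤ r) (a b : ℝ) (hab : a < b)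
    (φ f : ℝ → Fin r → ℝ) (p : CarnotPt r) (hpa : p.1 = φ a)
    (hint : IntegrableOn f (Icc a b))
    (hderiv : ∀ᵐ t ∂(volume.restrict (Icc a b)), HasDerivAt φ (f t) t)
    (hftc : ∀ t₁ ∈ Icc a b, ∀ t₂ ∈ Icc a b, φ t₂ = φ t₁ + ∫ t in t₁..t₂, f t)
    (γ : ℝ → CarnotPt r)
    (hγ : ∀ t, γ t = (φ t,
      fun q => p.2 q + (1 / 2) * ∫ s in a..t,
        (φ s q.1.1 * f s q.1.2 - φ s q.1.2 * f s q.1.1))) :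
    γ a = p ∧
    (∃ G : ℝ → CarnotPt r, IntegrableOn G (Icc a b) ∧
      (∀ᵐ t ∂(volume.restrict (Icc a b)), HasDerivAt γ (G t) t) ∧
      (∀ t₁ ∈ Icc a b, ∀ t₂ ∈ Icc a b, γ t₂ = γ t₁ + ∫ t in t₁..t₂, G t) ∧
      (∀ᵐ t ∂(volume.restrict (Icc a b)), ∃ c : Fin r → ℝ,
        G t = ∑ k, c k • Xh k (γ t))) ∧
    ((∀ t, HasDerivAt φ (f t) t) → Continuous f → ContDiff ℝ 1 γ) :=
  horizontal_lift_general r a b φ f p hpa hint hftc γ hγ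
end

section
/- Let h > 0, ε > 0, Q, V, W ∈ ℝʳ with |V − W| ≤ rε and |Q + 2hV| ≤ 2rεh. Define c̃(t) = Q + tW + (t²/h²)(−4hV − 2hW − 3Q) + (t³/h³)(3hV + hW + 2Q) on [0,h]. Then there is a constant C depending only on r (not on h, ε, Q, V, W) such that |c̃'(t) − V| ≤ Cε for all t ∈ [0,h]. -/
open Set

/-! Writing `τ = t / h`, the velocity of the Hermite cubic minus `V` is
`(1 - τ)(1 - 3τ) • (W - V) - (6τ(1 - τ) / h) • (Q + 2h • V)`, a combination of the two defects
that the hypotheses control. For `τ ∈ [0, 1]` the first coefficient has absolute value at most `1`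
and `6τ(1 - τ) ≤ 3/2`, so `‖c' t - V‖ ≤ rε + (3 / 2h) · 2rεh = 4rε`. -/

variable {E : Type*} [NormedAddCommGroup E] [NormedSpace ℝ E]

/-- The cubic `c` with `c 0 = Q`, `c' 0 = W`, `c h = -h • V`, `c' h = V`. -/
noncomputable def hermiteCubic (h : ℝ) (Q V W : E) (t : ℝ) : E :=
  Q + t • W + (t ^ 2 / h ^ 2) • (-((4 * h) • V) - (2 * h) • W - 3 • Q)
    + (t ^ 3 / h ^ 3) • ((3 * h) • V + h • W + 2 • Q)

theorem hasDerivAt_hermiteCubic {h : ℝ} (hh : h ≠ 0) (Q V W : E) (t : ℝ) :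
    HasDerivAt (hermiteCubic h Q V W)
      (V + ((1 - t / h) * (1 - 3 * (t / h))) • (W - V)
        - (6 * (t / h) * (1 - t / h) / h) • (Q + (2 * h) • V)) t := by
  have hraw := (((hasDerivAt_const t Q).add ((hasDerivAt_id t).smul_const W)).add
      (((hasDerivAt_pow 2 t).div_const (h ^ 2)).smul_const
        (-((4 * h) • V) - (2 * h) • W - 3 • Q))).add
      (((hasDerivAt_pow 3 t).div_const (h ^ 3)).smul_const ((3 * h) • V + h • W + 2 • Q))
  refine hraw.congr_deriv ?_
  simp only [zero_add, one_smul, Nat.cast_ofNat, Nat.add_one_sub_one, pow_one,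
    ← Nat.cast_smul_eq_nsmul ℝ]
  match_scalars <;> field_simp <;> ring

theorem abs_one_sub_mul_one_sub_three_mul_le_one {τ : ℝ} (h0 : 0 ≤ τ) (h1 : τ ≤ 1) :
    |(1 - τ) * (1 - 3 * τ)| ≤ 1 := by
  rw [abs_le]; constructor <;> nlinarith

theorem six_mul_mul_one_sub_le {τ : ℝ} : 6 * τ * (1 - τ) ≤ 3 / 2 := by
  nlinarith [sq_nonneg (2 * τ - 1)]

theorem norm_hermiteCubic_velocity_sub_le {h t : ℝ} (hh : 0 < h) (ht : t ∈ Icc 0 h)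
    (Q V W : E) :
    ‖((1 - t / h) * (1 - 3 * (t / h))) • (W - V)
        - (6 * (t / h) * (1 - t / h) / h) • (Q + (2 * h) • V)‖
      ≤ ‖W - V‖ + 3 / (2 * h) * ‖Q + (2 * h) • V‖ := by
  obtain ⟨hτ0, hτ1⟩ : 0 ≤ t / h ∧ t / h ≤ 1 :=
    ⟨div_nonneg ht.1 hh.le, (div_le_one hh).2 ht.2⟩
  have hb0 : 0 ≤ 6 * (t / h) * (1 - t / h) / h := div_nonneg (by nlinarith) hh.le
  calc _ ≤ |(1 - t / h) * (1 - 3 * (t / h))| * ‖W - V‖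
          + (6 * (t / h) * (1 - t / h) / h) * ‖Q + (2 * h) • V‖ := by
        refine (norm_sub_le _ _).trans_eq ?_
        rw [norm_smul, norm_smul, Real.norm_eq_abs, Real.norm_of_nonneg hb0]
    _ ≤ 1 * ‖W - V‖ + 3 / 2 / h * ‖Q + (2 * h) • V‖ := by
        gcongr
        · exact abs_one_sub_mul_one_sub_three_mul_le_one hτ0 hτ1
        · exact six_mul_mul_one_sub_le
    _ = _ := by rw [one_mul, div_div]

/-- The velocity of the cubic Hermite interpolation curve stays `Cε`-close to `V` when the
data are `ε`-compatible; the constant `C` depends only on `r`. -/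
theorem cubic_interpolation_velocity_bound (r : ℕ) :
    ∃ C : ℝ, 0 < C ∧
      ∀ (h ε : ℝ), 0 < h → 0 < ε →
      ∀ Q V W : EuclideanSpace ℝ (Fin r),
        ‖V - W‖ ≤ r * ε → ‖Q + (2 * h) • V‖ ≤ 2 * r * ε * h →
      ∀ c : ℝ → EuclideanSpace ℝ (Fin r),
        (∀ t, c t = Q + t • W
          + (t ^ 2 / h ^ 2) • (-((4 * h) • V) - (2 * h) • W - 3 • Q)
          + (t ^ 3 / h ^ 3) • ((3 * h) • V + h • W + 2 • Q)) →
      ∀ t ∈ Icc (0:ℝ) h, ∀ v : EuclideanSpace ℝ (Fin r),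
        HasDerivAt c v t → ‖v - V‖ ≤ C * ε := by
  refine ⟨4 * r + 1, by positivity, ?_⟩
  intro h ε hh hε Q V W hVW hQ c hc t ht v hv
  obtain rfl : c = hermiteCubic h Q V W := funext hc
  obtain rfl := hv.unique (hasDerivAt_hermiteCubic hh.ne' Q V W t)
  rw [add_sub_assoc, add_sub_cancel_left]
  calc _ ≤ ‖W - V‖ + 3 / (2 * h) * ‖Q + (2 * h) • V‖ :=
        norm_hermiteCubic_velocity_sub_le hh ht Q V W
    _ ≤ r * ε + 3 / (2 * h) * (2 * r * ε * h) := by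
        rw [norm_sub_rev]; gcongr
    _ = 4 * r * ε := by field_simp; ring
    _ ≤ (4 * r + 1) * ε := by nlinarith
end

section
/- Let γ: [m,M] → ℝⁿ be continuous, K ⊂ [m,M] compact with m, M ∈ K, [m,M]\K = ⋃_l (a_l, b_l), a_l, b_l ∈ K. Suppose γ is differentiable at every point of K with γ'|_K continuous on K, and for each l there are C¹ curves ψ_l: [a_l, b_l] → ℝⁿ with ψ_l(a_l) = γ(a_l), ψ_l(b_l) = γ(b_l), ψ_l'(a_l) = γ'(a_l), ψ_l'(b_l) = γ'(b_l), and sup_{[a_l,b_l]} |ψ_l' − γ'(a_l)| ≤ Cε_l where ε_l → 0. Define Γ = γ on K and Γ = ψ_l on (a_l, b_l). Then Γ is C¹ on [m,M] with Γ' = γ' on K and Γ' = ψ_l' on (a_l, b_l). -/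
/-!
On a gap `(a l, b l)` the glued curve is `ψ l`, so everything happens at points `t ∈ K`.
There the glued derivative `G` is continuous: only finitely many gaps have `r l` large, and each of
those either ends at `t` (where `ψ l' = g`) or stays away from `t`; on every other gap `ψ l'` is
uniformly close to `g` at the endpoint lying between `t` and the point, which is close to `g t`.
Differentiability at `t` then follows by splitting an increment `Γ s - Γ t` at that endpoint `p`:
the piece from `t` to `p` is controlled by the derivative of `γ` along `K`, and the piece from `p`
to `s` by the mean value inequality, since `‖G - g t‖` is small there.
-/

open Set Filter Topology

open Classical in
noncomputable def glueIoo {β : Type*} (a b : ℕ → ℝ) (f : ℕ → ℝ → β) (g : ℝ → β) (t : ℝ) : β :=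
  if h : ∃ l, t ∈ Ioo (a l) (b l) then f h.choose t else g t

section glueIoo

variable {β : Type*} {a b : ℕ → ℝ} {f : ℕ → ℝ → β} {g : ℝ → β} {t : ℝ}

theorem glueIoo_of_forall_notMem (ht : ∀ l, t ∉ Ioo (a l) (b l)) : glueIoo a b f g t = g t :=
  dif_neg (not_exists.2 ht)

theorem glueIoo_of_mem (hdisj : Pairwise (Function.onFun Disjoint (fun l => Ioo (a l) (b l))))
    {l : ℕ} (ht : t ∈ Ioo (a l) (b l)) : glueIoo a b f g t = f l t := by
  have h : ∃ l, t ∈ Ioo (a l) (b l) := ⟨l, ht⟩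
  rw [glueIoo, dif_pos h, hdisj.eq (not_disjoint_iff.2 ⟨t, h.choose_spec, ht⟩)]

end glueIoo

theorem exists_endpoint_mem_uIcc {a b s t : ℝ} (ht : t ∉ Ioo a b) (hs : s ∈ Ioo a b) :
    ∃ p ∈ ({a, b} : Set ℝ), p ∈ uIcc t s ∧ uIcc p s ⊆ Icc a b := by
  have hsI : s ∈ Icc a b := Ioo_subset_Icc_self hs
  rcases le_total t s with hts | hst
  · have hta : t ≤ a := not_lt.1 fun h => ht ⟨h, hts.trans_lt hs.2⟩
    exact ⟨a, .inl rfl, ⟨inf_le_left.trans hta, hs.1.le.trans le_sup_right⟩,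
      uIcc_subset_Icc (left_mem_Icc.2 (hs.1.trans hs.2).le) hsI⟩
  · have hbt : b ≤ t := not_lt.1 fun h => ht ⟨hs.1.trans_le hst, h⟩
    exact ⟨b, .inr rfl, ⟨inf_le_right.trans hs.2.le, hbt.trans le_sup_left⟩,
      uIcc_subset_Icc (right_mem_Icc.2 (hs.1.trans hs.2).le) hsI⟩

theorem eqOn_Icc_of_eqOn_Ioo {α β : Type*} [LinearOrder α] {f g : α → β} {a b : α}
    (h : EqOn f g (Ioo a b)) (ha : f a = g a) (hb : f b = g b) : EqOn f g (Icc a b) := by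
  intro u hu
  rcases hu.1.eq_or_lt with rfl | hau
  · exact ha
  rcases hu.2.eq_or_lt with rfl | hub
  · exact hb
  exact h ⟨hau, hub⟩

section Gluing

variable {E : Type*} [NormedAddCommGroup E] [NormedSpace ℝ E]

theorem norm_sub_sub_smul_le_of_norm_deriv_sub_le {f f' : ℝ → E} {p s η : ℝ} {v : E}
    (hf : ∀ u ∈ uIcc p s, HasDerivWithinAt f (f' u) (uIcc p s) u)
    (hbound : ∀ u ∈ uIcc p s, ‖f' u - v‖ ≤ η) :
    ‖f s - f p - (s - p) • v‖ ≤ η * ‖s - p‖ := by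
  have hfv : ∀ u ∈ uIcc p s, HasDerivWithinAt (fun x => f x - x • v) (f' u - v) (uIcc p s) u :=
    fun u hu => (hf u hu).sub (by simpa using (hasDerivWithinAt_id u _).smul_const v)
  have := (convex_uIcc p s).norm_image_sub_le_of_norm_hasDerivWithin_le hfv hbound
    left_mem_uIcc right_mem_uIcc
  convert this using 2
  module

theorem norm_sub_sub_smul_le_of_mem_uIcc {f : ℝ → E} {x y z η : ℝ} {v : E} (hy : y ∈ uIcc x z)
    (hxy : ‖f y - f x - (y - x) • v‖ ≤ η * ‖y - x‖)
    (hyz : ‖f z - f y - (z - y) • v‖ ≤ η * ‖z - y‖) :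
    ‖f z - f x - (z - x) • v‖ ≤ η * ‖z - x‖ := by
  have hdist : ‖y - x‖ + ‖z - y‖ = ‖z - x‖ := by
    have := dist_add_dist_of_mem_segment (segment_eq_uIcc x z ▸ hy)
    rwa [dist_eq_norm, dist_eq_norm, dist_eq_norm, norm_sub_rev x y, norm_sub_rev y z,
      norm_sub_rev x z] at this
  calc ‖f z - f x - (z - x) • v‖
      = ‖(f y - f x - (y - x) • v) + (f z - f y - (z - y) • v)‖ := by congr 1; module
    _ ≤ η * ‖y - x‖ + η * ‖z - y‖ := (norm_add_le _ _).trans (add_le_add hxy hyz)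
    _ = η * ‖z - x‖ := by rw [← mul_add, hdist]

theorem hasDerivWithinAt_of_hasDerivWithinAt_of_gaps {f f' : ℝ → E} {S K : Set ℝ} {t : ℝ}
    (hK : HasDerivWithinAt f (f' t) K t) (hf' : ContinuousWithinAt f' S t)
    (hgap : ∀ s ∈ S \ K, ∃ p ∈ K, p ∈ uIcc t s ∧ uIcc p s ⊆ S ∧
      ∀ u ∈ uIcc p s, HasDerivWithinAt f (f' u) (uIcc p s) u) :
    HasDerivWithinAt f (f' t) S t := by
  rw [hasDerivWithinAt_iff_isLittleO, Asymptotics.isLittleO_iff] at hK ⊢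
  intro η hη
  obtain ⟨δ, hδ, hf'δ⟩ := Metric.continuousWithinAt_iff.1 hf' η hη
  obtain ⟨δ', hδ', hKδ⟩ := Metric.eventually_nhds_iff.1 (eventually_nhdsWithin_iff.1 (hK hη))
  filter_upwards [inter_mem_nhdsWithin S (Metric.ball_mem_nhds t (lt_min hδ hδ'))]
    with s ⟨hsS, hsδ⟩
  rw [Metric.mem_ball, lt_min_iff] at hsδ
  by_cases hsK : s ∈ K
  · exact hKδ hsδ.2 hsK
  obtain ⟨p, hpK, hp, hpS, hderiv⟩ := hgap s ⟨hsS, hsK⟩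
  have hnear : ∀ u ∈ uIcc t s, dist u t ≤ dist s t := fun u hu => by
    simpa only [Real.dist_eq] using abs_sub_left_of_mem_uIcc hu
  refine norm_sub_sub_smul_le_of_mem_uIcc hp (hKδ ((hnear p hp).trans_lt hsδ.2) hpK) ?_
  refine norm_sub_sub_smul_le_of_norm_deriv_sub_le hderiv fun u hu => ?_
  have hu' : u ∈ uIcc t s := uIcc_subset_uIcc hp right_mem_uIcc hu
  simpa only [dist_eq_norm] using (hf'δ (hpS hu) ((hnear u hu').trans_lt hsδ.1)).le

theorem tendsto_deriv_nhdsWithin_Ioo {ψ : ℝ → E} (hψ : ContDiff ℝ 1 ψ) {a b t : ℝ} {v : E}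
    (ht : t ∉ Ioo a b) (ha : t = a → deriv ψ t = v) (hb : t = b → deriv ψ t = v) :
    Tendsto (deriv ψ) (𝓝[Ioo a b] t) (𝓝 v) := by
  by_cases hend : t = a ∨ t = b
  · rw [← hend.elim ha hb]
    exact (hψ.continuous_deriv le_rfl).continuousAt.tendsto.mono_left nhdsWithin_le_nhds
  · have hcl : t ∉ closure (Ioo a b) := fun h => by
      have hmem : t ∈ Icc a b \ Ioo a b := ⟨closure_minimal Ioo_subset_Icc_self isClosed_Icc h, ht⟩
      rw [Icc_sdiff_Ioo_same (hmem.1.1.trans hmem.1.2)] at hmem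
      exact hend hmem
    rw [notMem_closure_iff_nhdsWithin_eq_bot.1 hcl]
    exact tendsto_bot

variable {K S : Set ℝ} {a b r : ℕ → ℝ} {g : ℝ → E} {ψ : ℕ → ℝ → E}

theorem eventually_dist_deriv_lt (haK : ∀ l, a l ∈ K) (hbK : ∀ l, b l ∈ K)
    (hψ : ∀ l, ContDiff ℝ 1 (ψ l))
    (hψ'a : ∀ l, deriv (ψ l) (a l) = g (a l)) (hψ'b : ∀ l, deriv (ψ l) (b l) = g (b l))
    (hr : Tendsto r atTop (𝓝 0))
    (hclose : ∀ l, ∀ u ∈ Icc (a l) (b l), ‖deriv (ψ l) u - g (a l)‖ ≤ r l)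
    {t : ℝ} (ht : ∀ l, t ∉ Ioo (a l) (b l)) (hg : ContinuousWithinAt g K t) {η : ℝ} (hη : 0 < η) :
    ∀ᶠ s in 𝓝 t, ∀ l, s ∈ Ioo (a l) (b l) → dist (deriv (ψ l) s) (g t) < η := by
  obtain ⟨L, hL⟩ := eventually_atTop.1 (hr.eventually (gt_mem_nhds (by positivity : 0 < η / 4)))
  have hfew : ∀ᶠ s in 𝓝 t, ∀ l ∈ Finset.range L,
      s ∈ Ioo (a l) (b l) → dist (deriv (ψ l) s) (g t) < η :=
    (Finset.eventually_all _).2 fun l _ => eventually_nhdsWithin_iff.1 <|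
      (tendsto_deriv_nhdsWithin_Ioo (hψ l) (ht l) (fun h => h ▸ hψ'a l)
        (fun h => h ▸ hψ'b l)).eventually (Metric.ball_mem_nhds _ hη)
  obtain ⟨δ, hδ, hgδ⟩ := Metric.continuousWithinAt_iff.1 hg (η / 2) (by positivity)
  filter_upwards [hfew, Metric.ball_mem_nhds t hδ] with s hsfew hsδ l hs
  by_cases hl : l < L
  · exact hsfew l (Finset.mem_range.2 hl) hs
  obtain ⟨p, hp, hpts, hpsI⟩ := exists_endpoint_mem_uIcc (ht l) hs
  have hpI : p ∈ Icc (a l) (b l) := hpsI left_mem_uIcc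
  have hpK : p ∈ K := by rcases hp with rfl | rfl <;> simp only [haK, hbK]
  have hψp : deriv (ψ l) p = g p := by rcases hp with rfl | rfl <;> simp only [hψ'a, hψ'b]
  have hpt : dist p t < δ :=
    lt_of_le_of_lt (by simpa only [Real.dist_eq] using abs_sub_left_of_mem_uIcc hpts) hsδ
  calc dist (deriv (ψ l) s) (g t)
      ≤ dist (deriv (ψ l) s) (g (a l)) + dist (deriv (ψ l) p) (g (a l)) + dist (g p) (g t) := by
        rw [hψp, dist_comm (g p)]
        exact dist_triangle4 _ _ _ _
    _ < η / 4 + η / 4 + η / 2 := by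
      rw [dist_eq_norm, dist_eq_norm]
      have hrl := hL l (not_lt.1 hl)
      gcongr
      exacts [(hclose l s (hpsI right_mem_uIcc)).trans_lt hrl, (hclose l p hpI).trans_lt hrl,
        hgδ hpK hpt]
    _ = η := by ring

theorem continuousWithinAt_glueIoo_deriv
    (hdisj : Pairwise (Function.onFun Disjoint (fun l => Ioo (a l) (b l))))
    (hcover : S \ K ⊆ ⋃ l, Ioo (a l) (b l)) (hKI : ∀ s ∈ K, ∀ l, s ∉ Ioo (a l) (b l))
    (haK : ∀ l, a l ∈ K) (hbK : ∀ l, b l ∈ K) (hψ : ∀ l, ContDiff ℝ 1 (ψ l))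
    (hψ'a : ∀ l, deriv (ψ l) (a l) = g (a l)) (hψ'b : ∀ l, deriv (ψ l) (b l) = g (b l))
    (hr : Tendsto r atTop (𝓝 0))
    (hclose : ∀ l, ∀ u ∈ Icc (a l) (b l), ‖deriv (ψ l) u - g (a l)‖ ≤ r l)
    {t : ℝ} (ht : t ∈ K) (hg : ContinuousWithinAt g K t) :
    ContinuousWithinAt (glueIoo a b (fun l => deriv (ψ l)) g) S t := by
  rw [ContinuousWithinAt, glueIoo_of_forall_notMem (hKI t ht)]
  refine Metric.tendsto_nhds.2 fun η hη => ?_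
  filter_upwards [self_mem_nhdsWithin, nhdsWithin_le_nhds
      (eventually_dist_deriv_lt haK hbK hψ hψ'a hψ'b hr hclose (hKI t ht) hg hη),
    nhdsWithin_le_nhds (eventually_nhdsWithin_iff.1 (Metric.tendsto_nhds.1 hg η hη))]
    with s hsS hsI hsK'
  by_cases hsK : s ∈ K
  · rw [glueIoo_of_forall_notMem (hKI s hsK)]
    exact hsK' hsK
  · obtain ⟨l, hl⟩ := mem_iUnion.1 (hcover ⟨hsS, hsK⟩)
    rw [glueIoo_of_mem hdisj hl]
    exact hsI l hl

theorem hasDerivWithinAt_of_eqOn_gaps {Γ G : ℝ → E} {t : ℝ} (ht : t ∈ K)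
    (hΓK : HasDerivWithinAt Γ (G t) K t) (hGS : ContinuousWithinAt G S t)
    (hcover : S \ K ⊆ ⋃ l, Ioo (a l) (b l)) (hKI : ∀ s ∈ K, ∀ l, s ∉ Ioo (a l) (b l))
    (haK : ∀ l, a l ∈ K) (hbK : ∀ l, b l ∈ K) (hIS : ∀ l, Icc (a l) (b l) ⊆ S)
    (hψ : ∀ l, Differentiable ℝ (ψ l)) (hΓψ : ∀ l, EqOn Γ (ψ l) (Icc (a l) (b l)))
    (hGψ : ∀ l, EqOn G (deriv (ψ l)) (Icc (a l) (b l))) :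
    HasDerivWithinAt Γ (G t) S t := by
  refine hasDerivWithinAt_of_hasDerivWithinAt_of_gaps hΓK hGS fun s hs => ?_
  obtain ⟨l, hl⟩ := mem_iUnion.1 (hcover hs)
  obtain ⟨p, hp, hpts, hpsI⟩ := exists_endpoint_mem_uIcc (hKI t ht l) hl
  refine ⟨p, by rcases hp with rfl | rfl; exacts [haK l, hbK l], hpts, hpsI.trans (hIS l),
    fun u hu => ?_⟩
  rw [hGψ l (hpsI hu)]
  exact (hψ l u).hasDerivAt.hasDerivWithinAt.congr (fun x hx => hΓψ l (hpsI hx)) (hΓψ l (hpsI hu))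

end Gluing

theorem glued_curve_C1_general {n : ℕ} (m M : ℝ)
    (K : Set ℝ) (hKsub : K ⊆ Icc m M)
    (a b : ℕ → ℝ)
    (haK : ∀ l, a l ∈ K) (hbK : ∀ l, b l ∈ K)
    (hdisj : Pairwise (Function.onFun Disjoint (fun l => Ioo (a l) (b l))))
    (hcover : (⋃ l, Ioo (a l) (b l)) = Icc m M \ K)
    (γ : ℝ → EuclideanSpace ℝ (Fin n))
    (g : ℝ → EuclideanSpace ℝ (Fin n))
    (hγdiff : ∀ t ∈ K, HasDerivWithinAt γ (g t) (Icc m M) t)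
    (hgcont : ContinuousOn g K)
    (ψ : ℕ → ℝ → EuclideanSpace ℝ (Fin n)) (hψC1 : ∀ l, ContDiff ℝ 1 (ψ l))
    (hψa : ∀ l, ψ l (a l) = γ (a l)) (hψb : ∀ l, ψ l (b l) = γ (b l))
    (hψ'a : ∀ l, deriv (ψ l) (a l) = g (a l)) (hψ'b : ∀ l, deriv (ψ l) (b l) = g (b l))
    (C : ℝ) (ε : ℕ → ℝ) (hε : Tendsto ε atTop (nhds 0))
    (hψclose : ∀ l, ∀ t ∈ Icc (a l) (b l), ‖deriv (ψ l) t - g (a l)‖ ≤ C * ε l)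
    (Γ : ℝ → EuclideanSpace ℝ (Fin n))
    (hΓK : ∀ t ∈ K, Γ t = γ t)
    (hΓψ : ∀ l, ∀ t ∈ Ioo (a l) (b l), Γ t = ψ l t) :
    ∃ G : ℝ → EuclideanSpace ℝ (Fin n), ContinuousOn G (Icc m M) ∧
      (∀ t ∈ Icc m M, HasDerivWithinAt Γ (G t) (Icc m M) t) ∧
      (∀ t ∈ K, G t = g t) ∧
      (∀ l, ∀ t ∈ Ioo (a l) (b l), G t = deriv (ψ l) t) := by
  set G := glueIoo a b (fun l => deriv (ψ l)) g
  have hKI : ∀ s ∈ K, ∀ l, s ∉ Ioo (a l) (b l) := fun s hs l hl =>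
    (hcover ▸ mem_iUnion_of_mem l hl : s ∈ Icc m M \ K).2 hs
  have hcases : ∀ t ∈ Icc m M, t ∈ K ∨ ∃ l, t ∈ Ioo (a l) (b l) := fun t htM =>
    or_iff_not_imp_left.2 fun ht => mem_iUnion.1 (hcover ▸ ⟨htM, ht⟩)
  have hGK : ∀ t ∈ K, G t = g t := fun t ht => glueIoo_of_forall_notMem (hKI t ht)
  have hGψ : ∀ l, ∀ t ∈ Ioo (a l) (b l), G t = deriv (ψ l) t := fun l t => glueIoo_of_mem hdisj
  have hGcont : ∀ t ∈ K, ContinuousWithinAt G (Icc m M) t := fun t ht =>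
    continuousWithinAt_glueIoo_deriv hdisj hcover.superset hKI haK hbK hψC1 hψ'a hψ'b
      (by simpa using hε.const_mul C) hψclose ht (hgcont t ht)
  have hΓI : ∀ l, EqOn Γ (ψ l) (Icc (a l) (b l)) := fun l =>
    eqOn_Icc_of_eqOn_Ioo (hΓψ l) (by rw [hΓK _ (haK l), hψa]) (by rw [hΓK _ (hbK l), hψb])
  have hGI : ∀ l, EqOn G (deriv (ψ l)) (Icc (a l) (b l)) := fun l =>
    eqOn_Icc_of_eqOn_Ioo (hGψ l) (by rw [hGK _ (haK l), hψ'a]) (by rw [hGK _ (hbK l), hψ'b])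
  refine ⟨G, fun t htM => ?_, fun t htM => ?_, hGK, hGψ⟩
  · rcases hcases t htM with ht | ⟨l, hl⟩
    · exact hGcont t ht
    · exact ((hψC1 l).continuous_deriv le_rfl).continuousAt.congr
        (eventually_of_mem (Ioo_mem_nhds hl.1 hl.2) fun s hs => (hGψ l s hs).symm)
        |>.continuousWithinAt
  rcases hcases t htM with ht | ⟨l, hl⟩
  · refine hasDerivWithinAt_of_eqOn_gaps ht ?_ (hGcont t ht) hcover.superset hKI haK hbK
      (fun l => Icc_subset_Icc (hKsub (haK l)).1 (hKsub (hbK l)).2)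
      (fun l => (hψC1 l).differentiable one_ne_zero) hΓI hGI
    rw [hGK t ht]
    exact ((hγdiff t ht).mono hKsub).congr hΓK (hΓK t ht)
  · rw [hGψ l t hl]
    exact ((hψC1 l).differentiable one_ne_zero t).hasDerivAt.congr_of_eventuallyEq
      (eventually_of_mem (Ioo_mem_nhds hl.1 hl.2) (hΓψ l)) |>.hasDerivWithinAt

/-- Gluing lemma: the curve obtained from `γ` on a compact set `K` and interpolating `C¹`
curves `ψₗ` on the complementary intervals `(aₗ, bₗ)` is `C¹` on `[m,M]`, with derivative
`γ'` on `K` and `ψₗ'` on `(aₗ, bₗ)`. -/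
theorem glued_curve_C1 {n : ℕ} (m M : ℝ) (hmM : m < M)
    (K : Set ℝ) (hK : IsCompact K) (hKsub : K ⊆ Icc m M) (hm : m ∈ K) (hM : M ∈ K)
    (a b : ℕ → ℝ) (hab : ∀ l, a l < b l)
    (haK : ∀ l, a l ∈ K) (hbK : ∀ l, b l ∈ K)
    (hdisj : Pairwise (Function.onFun Disjoint (fun l => Ioo (a l) (b l))))
    (hcover : (⋃ l, Ioo (a l) (b l)) = Icc m M \ K)
    (γ : ℝ → EuclideanSpace ℝ (Fin n)) (hγcont : ContinuousOn γ (Icc m M))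
    (g : ℝ → EuclideanSpace ℝ (Fin n))
    (hγdiff : ∀ t ∈ K, HasDerivWithinAt γ (g t) (Icc m M) t)
    (hgcont : ContinuousOn g K)
    (ψ : ℕ → ℝ → EuclideanSpace ℝ (Fin n)) (hψC1 : ∀ l, ContDiff ℝ 1 (ψ l))
    (hψa : ∀ l, ψ l (a l) = γ (a l)) (hψb : ∀ l, ψ l (b l) = γ (b l))
    (hψ'a : ∀ l, deriv (ψ l) (a l) = g (a l)) (hψ'b : ∀ l, deriv (ψ l) (b l) = g (b l))
    (C : ℝ) (hC : 0 ≤ C) (ε : ℕ → ℝ) (hε : Tendsto ε atTop (nhds 0))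
    (hψclose : ∀ l, ∀ t ∈ Icc (a l) (b l), ‖deriv (ψ l) t - g (a l)‖ ≤ C * ε l)
    (Γ : ℝ → EuclideanSpace ℝ (Fin n))
    (hΓK : ∀ t ∈ K, Γ t = γ t)
    (hΓψ : ∀ l, ∀ t ∈ Ioo (a l) (b l), Γ t = ψ l t) :
    ∃ G : ℝ → EuclideanSpace ℝ (Fin n), ContinuousOn G (Icc m M) ∧
      (∀ t ∈ Icc m M, HasDerivWithinAt Γ (G t) (Icc m M) t) ∧
      (∀ t ∈ K, G t = g t) ∧
      (∀ l, ∀ t ∈ Ioo (a l) (b l), G t = deriv (ψ l) t) :=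
  glued_curve_C1_general m M K hKsub a b haK hbK hdisj hcover γ g hγdiff hgcont ψ hψC1 hψa hψb hψ'a
    hψ'b C ε hε hψclose Γ hΓK hΓψ
end
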